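/- arXiv:1710.04851 — 6 statements merged into one kernel-verified Lean document; each statement's English description precedes it below -/
import Mathlib

section
/- The set 𝔎 of symplectic matrices of the form [[I+2a, 2b],[2c, I+2d]] in Sp(2g,ℤ) such that all diagonal entries of b and of c are even and the trace of a is even, is a subgroup of Sp(2g,ℤ). -/
open Matrix

/-- The standard symplectic form matrix `J = [[0, I], [-I, 0]]`. -/
def Jmat (g : ℕ) (R : Type*) [CommRing R] :
    Matrix (Fin g ⊕ Fin g) (Fin g ⊕ Fin g) R :=
  Matrix.fromBlocks 0 1 (-1) 0

/-- The set of integral symplectic matrices, `Sp(2g, ℤ)`. -/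
def SpSet (g : ℕ) : Set (Matrix (Fin g ⊕ Fin g) (Fin g ⊕ Fin g) ℤ) :=
  {X | Xᵀ * Jmat g ℤ * X = Jmat g ℤ}

/-- The subset `𝔎` of `Sp(2g, ℤ)`: symplectic matrices of the form
`[[I+2a, 2b], [2c, I+2d]]` with `Diag b` and `Diag c` even and `Tr a` even. -/
def KSet (g : ℕ) : Set (Matrix (Fin g ⊕ Fin g) (Fin g ⊕ Fin g) ℤ) :=
  {X | X ∈ SpSet g ∧ ∃ a b c d : Matrix (Fin g) (Fin g) ℤ,
    X = Matrix.fromBlocks (1 + 2 • a) (2 • b) (2 • c) (1 + 2 • d) ∧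
    (∀ i, (2:ℤ) ∣ b i i) ∧ (∀ i, (2:ℤ) ∣ c i i) ∧ (2:ℤ) ∣ Matrix.trace a}

/-- The principal congruence subgroup `Γ(2g, N)`: symplectic integral matrices
congruent to the identity modulo `N`. -/
def GammaSet (g : ℕ) (N : ℤ) : Set (Matrix (Fin g ⊕ Fin g) (Fin g ⊕ Fin g) ℤ) :=
  {X | X ∈ SpSet g ∧ ∀ i j, N ∣ (X i j - (1 : Matrix (Fin g ⊕ Fin g) (Fin g ⊕ Fin g) ℤ) i j)}

/-! Each of the blocks `a, b, c, d` of `X * Y` is the sum of those of `X` and `Y` plus an even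
matrix, so the parity conditions survive products. The inverse `[[Dᵀ, -Bᵀ], [-Cᵀ, Aᵀ]]` has
`dᵀ` in place of `a`, and `tr a + tr d` is even by taking traces in the symplectic relation
`Aᵀ D - Cᵀ B = 1`. -/

open SymplecticGroup

theorem Jmat_eq_neg_J (g : ℕ) (R : Type*) [CommRing R] : Jmat g R = -J (Fin g) R := by
  simp [Jmat, J, fromBlocks_neg]

theorem mem_SpSet_iff {g : ℕ} {X : Matrix (Fin g ⊕ Fin g) (Fin g ⊕ Fin g) ℤ} :
    X ∈ SpSet g ↔ X ∈ symplecticGroup (Fin g) ℤ := by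
  simp [SpSet, mem_iff', Jmat_eq_neg_J]

section Blocks

variable {l R : Type*}

theorem neg_J_mul_transpose_fromBlocks_mul_J [Fintype l] [DecidableEq l] [CommRing R]
    (A B C D : Matrix l l R) :
    -J l R * (fromBlocks A B C D)ᵀ * J l R = fromBlocks Dᵀ (-Bᵀ) (-Cᵀ) Aᵀ := by
  simp [J, fromBlocks_transpose, fromBlocks_multiply, fromBlocks_neg]

theorem fromBlocks_one_add_two_smul_mul [Fintype l] [DecidableEq l] [Ring R]
    (a b c d a' b' c' d' : Matrix l l R) :
    (fromBlocks (1 + 2 • a) (2 • b) (2 • c) (1 + 2 • d) : Matrix (l ⊕ l) (l ⊕ l) R) *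
        fromBlocks (1 + 2 • a') (2 • b') (2 • c') (1 + 2 • d') =
      fromBlocks (1 + 2 • (a + a' + 2 • (a * a' + b * c')))
        (2 • (b + b' + 2 • (a * b' + b * d')))
        (2 • (c + c' + 2 • (c * a' + d * c')))
        (1 + 2 • (d + d' + 2 • (c * b' + d * d'))) := by
  rw [fromBlocks_multiply]
  congr 1 <;> noncomm_ring

theorem two_dvd_add_add_two_smul_apply {M N P : Matrix l l ℤ} {i : l}
    (hM : 2 ∣ M i i) (hN : 2 ∣ N i i) : 2 ∣ (M + N + 2 • P) i i := by
  rw [Matrix.add_apply, Matrix.add_apply, Matrix.smul_apply, nsmul_eq_mul, Nat.cast_ofNat]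
  exact dvd_add (dvd_add hM hN) (dvd_mul_right 2 _)

theorem two_dvd_trace_add_add_two_smul [Fintype l] {M N P : Matrix l l ℤ}
    (hM : 2 ∣ M.trace) (hN : 2 ∣ N.trace) : 2 ∣ (M + N + 2 • P).trace := by
  rw [trace_add, trace_add, trace_smul, nsmul_eq_mul, Nat.cast_ofNat]
  exact dvd_add (dvd_add hM hN) (dvd_mul_right 2 _)

theorem two_dvd_trace_add_trace_of_fromBlocks_mem [Fintype l] [DecidableEq l]
    {a b c d : Matrix l l ℤ}
    (h : fromBlocks (1 + 2 • a) (2 • b) (2 • c) (1 + 2 • d) ∈ symplecticGroup l ℤ) :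
    2 ∣ a.trace + d.trace := by
  have hrel := (fromBlocks_mem_iff.mp h).2.2
  have hzero : (2 : ℤ) • (aᵀ + d + 2 • (aᵀ * d - cᵀ * b)) = 0 := by
    rw [← sub_eq_zero.mpr hrel]
    simp only [transpose_add, transpose_one, transpose_smul]
    noncomm_ring
  have htrace := congrArg trace ((smul_eq_zero_iff_right two_ne_zero).mp hzero)
  rw [trace_add, trace_add, trace_smul, trace_transpose, nsmul_eq_mul, Nat.cast_ofNat,
    trace_zero] at htrace
  exact ⟨-(aᵀ * d - cᵀ * b).trace, by linarith⟩

end Blocks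

theorem one_mem_KSet (g : ℕ) : 1 ∈ KSet g :=
  ⟨mem_SpSet_iff.mpr (one_mem _), 0, 0, 0, 0, by simp [← fromBlocks_one],
    fun _ => dvd_zero 2, fun _ => dvd_zero 2, by simp⟩

theorem mul_mem_KSet {g : ℕ} {X Y : Matrix (Fin g ⊕ Fin g) (Fin g ⊕ Fin g) ℤ}
    (hX : X ∈ KSet g) (hY : Y ∈ KSet g) : X * Y ∈ KSet g := by
  obtain ⟨hXsp, a, b, c, d, rfl, hb, hc, ha⟩ := hX
  obtain ⟨hYsp, a', b', c', d', rfl, hb', hc', ha'⟩ := hY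
  refine ⟨mem_SpSet_iff.mpr (mul_mem (mem_SpSet_iff.mp hXsp) (mem_SpSet_iff.mp hYsp)),
    _, _, _, _, fromBlocks_one_add_two_smul_mul a b c d a' b' c' d',
    fun i => two_dvd_add_add_two_smul_apply (hb i) (hb' i),
    fun i => two_dvd_add_add_two_smul_apply (hc i) (hc' i),
    two_dvd_trace_add_add_two_smul ha ha'⟩

theorem exists_inv_mem_KSet {g : ℕ} {X : Matrix (Fin g ⊕ Fin g) (Fin g ⊕ Fin g) ℤ}
    (hX : X ∈ KSet g) : ∃ Y ∈ KSet g, X * Y = 1 ∧ Y * X = 1 := by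
  obtain ⟨hXsp, a, b, c, d, hXeq, hb, hc, ha⟩ := hX
  let S : symplecticGroup (Fin g) ℤ := ⟨X, mem_SpSet_iff.mp hXsp⟩
  have hinv : ((S⁻¹ : symplecticGroup (Fin g) ℤ) : Matrix _ _ ℤ) =
      fromBlocks (1 + 2 • dᵀ) (2 • -bᵀ) (2 • -cᵀ) (1 + 2 • aᵀ) := by
    rw [coe_inv, show (S : Matrix _ _ ℤ) = X from rfl, hXeq, neg_J_mul_transpose_fromBlocks_mul_J]
    simp only [transpose_add, transpose_one, transpose_smul, smul_neg]
  have htrace : 2 ∣ dᵀ.trace := by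
    rw [trace_transpose, ← (Int.dvd_add_right ha)]
    exact two_dvd_trace_add_trace_of_fromBlocks_mem (hXeq ▸ mem_SpSet_iff.mp hXsp)
  refine ⟨(S⁻¹ : symplecticGroup (Fin g) ℤ),
    ⟨mem_SpSet_iff.mpr (S⁻¹).2, dᵀ, -bᵀ, -cᵀ, aᵀ, hinv, fun i => ?_, fun i => ?_, htrace⟩,
    congrArg Subtype.val (mul_inv_cancel S), congrArg Subtype.val (inv_mul_cancel S)⟩
  · simpa using hb i
  · simpa using hc i

theorem stmt3_general (g : ℕ) :
    (1 : Matrix (Fin g ⊕ Fin g) (Fin g ⊕ Fin g) ℤ) ∈ KSet g ∧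
    (∀ X ∈ KSet g, ∀ Y ∈ KSet g, X * Y ∈ KSet g) ∧
    (∀ X ∈ KSet g, ∃ Y ∈ KSet g, X * Y = 1 ∧ Y * X = 1) :=
  ⟨one_mem_KSet g, fun _ hX _ hY => mul_mem_KSet hX hY, fun _ => exists_inv_mem_KSet⟩

/-- `𝔎` is a subgroup of `Sp(2g, ℤ)`: it contains the identity, is closed under
multiplication, and every element has an inverse lying in `𝔎`. -/
theorem stmt3 (g : ℕ) (hg : 1 ≤ g) :
    (1 : Matrix (Fin g ⊕ Fin g) (Fin g ⊕ Fin g) ℤ) ∈ KSet g ∧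
    (∀ X ∈ KSet g, ∀ Y ∈ KSet g, X * Y ∈ KSet g) ∧
    (∀ X ∈ KSet g, ∃ Y ∈ KSet g, X * Y = 1 ∧ Y * X = 1) :=
  stmt3_general g
end

section
/- Every matrix in the principal congruence subgroup Γ(2g,4) (symplectic matrices congruent to the identity modulo 4) lies in 𝔎, and every matrix of 𝔎 is congruent to the identity modulo 2; that is, Γ(2g,4) ≤ 𝔎 ≤ Γ(2g,2). -/
/-!
Both inclusions come from writing a matrix congruent to `1` modulo `N` as `1 + N • Y`:
for `X = 1 + 4 • Y` take `a, b, c, d` to be twice the blocks of `Y`, and conversely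
`[[1 + 2a, 2b], [2c, 1 + 2d]] = 1 + 2 • [[a, b], [c, d]]`.
-/

open Matrix

namespace Matrix

variable {n l m R : Type*}

theorem forall_dvd_sub_one_apply_iff [DecidableEq n] [Ring R] (N : R) (X : Matrix n n R) :
    (∀ i j, N ∣ X i j - (1 : Matrix n n R) i j) ↔ ∃ Y : Matrix n n R, X = 1 + N • Y := by
  constructor
  · intro h
    choose Y hY using h
    refine ⟨of Y, ?_⟩
    ext i j
    rw [add_apply, smul_apply, of_apply, smul_eq_mul, ← hY, add_sub_cancel]
  · rintro ⟨Y, rfl⟩ i j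
    simp

theorem fromBlocks_one_add_smul {S : Type*} [DecidableEq l] [DecidableEq m] [AddMonoidWithOne R]
    [DistribSMul S R] (k : S) (a : Matrix l l R) (b : Matrix l m R) (c : Matrix m l R)
    (d : Matrix m m R) :
    fromBlocks (1 + k • a) (k • b) (k • c) (1 + k • d) = 1 + k • fromBlocks a b c d := by
  rw [fromBlocks_smul, ← fromBlocks_one, fromBlocks_add, zero_add, zero_add]

end Matrix

theorem stmt5_general (g : ℕ) :
    GammaSet g 4 ⊆ KSet g ∧ KSet g ⊆ GammaSet g 2 := by
  constructor
  · rintro X ⟨hX, hmod⟩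
    obtain ⟨Y, rfl⟩ := (forall_dvd_sub_one_apply_iff _ X).mp hmod
    refine ⟨hX, 2 • Y.toBlocks₁₁, 2 • Y.toBlocks₁₂, 2 • Y.toBlocks₂₁, 2 • Y.toBlocks₂₂,
      ?_, fun _ => by simp, fun _ => by simp, ?_⟩
    · rw [fromBlocks_one_add_smul, ← fromBlocks_smul, fromBlocks_toBlocks, smul_smul]
      norm_num
    · rw [trace_smul, nsmul_eq_mul]
      exact dvd_mul_right _ _
  · rintro X ⟨hX, a, b, c, d, rfl, -, -, -⟩
    refine ⟨hX, (forall_dvd_sub_one_apply_iff _ _).mpr ⟨fromBlocks a b c d, ?_⟩⟩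
    rw [fromBlocks_one_add_smul]
    exact congrArg (1 + ·) (ofNat_smul_eq_nsmul (R := ℤ) 2 _)

/-- `Γ(2g,4) ≤ 𝔎 ≤ Γ(2g,2)`. -/
theorem stmt5 (g : ℕ) (hg : 1 ≤ g) :
    GammaSet g 4 ⊆ KSet g ∧ KSet g ⊆ GammaSet g 2 :=
  stmt5_general g
end

section
/- The quotient group Γ(2g,2)/𝔎 is an elementary abelian 2-group of order 2^(2g+1). -/
open Matrix

namespace Stmt6Aux


/-! ### ZMod arithmetic helpers -/

def hh : ZMod 4 → ZMod 2 := fun v => if v = 2 then 1 else 0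

lemma hh_add {u v : ZMod 4} (hu : u = 0 ∨ u = 2) (hv : v = 0 ∨ v = 2) :
    hh (u + v) = hh u + hh v := by
  rcases hu with rfl | rfl <;> rcases hv with rfl | rfl <;> decide

lemma two_mul_zmod4 : ∀ z : ZMod 4, 2 * z = 0 ∨ 2 * z = 2 := by decide

lemma hh_two_mul (y : ℤ) : hh ((2 * y : ℤ) : ZMod 4) = ((y : ℤ) : ZMod 2) := by
  rcases Int.even_or_odd y with ⟨k, rfl⟩ | ⟨k, rfl⟩
  · have h1 : ((2 * (k + k) : ℤ) : ZMod 4) = 4 * (k : ZMod 4) := by push_cast; ring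
    have h2 : (4 : ZMod 4) = 0 := by decide
    rw [h1, h2, zero_mul]
    have h4 : ((k + k : ℤ) : ZMod 2) = 2 * (k : ZMod 2) := by push_cast; ring
    have h3 : (2 : ZMod 2) = 0 := by decide
    rw [h4, h3, zero_mul]; rfl
  · have h1 : ((2 * (2 * k + 1) : ℤ) : ZMod 4) = 4 * (k : ZMod 4) + 2 := by push_cast; ring
    have h2 : (4 : ZMod 4) = 0 := by decide
    rw [h1, h2, zero_mul, zero_add]
    have h4 : ((2 * k + 1 : ℤ) : ZMod 2) = 2 * (k : ZMod 2) + 1 := by push_cast; ring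
    have h3 : (2 : ZMod 2) = 0 := by decide
    rw [h4, h3, zero_mul, zero_add]; rfl

lemma hh_zero_iff {u : ZMod 4} (hu : u = 0 ∨ u = 2) : hh u = 0 ↔ u = 0 := by
  rcases hu with rfl | rfl <;> decide

def lf (x : ZMod 2) : ℤ := if x = 1 then 1 else 0

lemma lf_cast : ∀ x : ZMod 2, ((lf x : ℤ) : ZMod 2) = x := by decide

lemma lf_sq (x : ZMod 2) : lf x * lf x = lf x := by unfold lf; split <;> ring

/-! ### matrix congruence helpers -/

section Mat
variable {n : Type*} [Fintype n] [DecidableEq n]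

lemma key_id (X Y : Matrix n n ℤ) : X * Y - 1 = (X - 1) * (Y - 1) + (X - 1) + (Y - 1) := by
  noncomm_ring

lemma entry_dvd_mul {X Y : Matrix n n ℤ}
    (hX : ∀ i j, (2:ℤ) ∣ (X i j - (1 : Matrix n n ℤ) i j))
    (hY : ∀ i j, (2:ℤ) ∣ (Y i j - (1 : Matrix n n ℤ) i j)) (i j : n) :
    (2:ℤ) ∣ ((X * Y) i j - (1 : Matrix n n ℤ) i j) := by
  have h := congrArg (fun M => M i j) (key_id X Y)
  simp only [Matrix.sub_apply, Matrix.add_apply, Matrix.mul_apply] at h ⊢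
  rw [h]
  refine dvd_add (dvd_add ?_ ?_) ?_
  · refine Finset.dvd_sum fun k _ => ?_
    exact Dvd.dvd.mul_right (by simpa using hX i k) _
  · simpa using hX i j
  · simpa using hY i j

lemma entry_mod4 {X Y : Matrix n n ℤ}
    (hX : ∀ i j, (2:ℤ) ∣ (X i j - (1 : Matrix n n ℤ) i j))
    (hY : ∀ i j, (2:ℤ) ∣ (Y i j - (1 : Matrix n n ℤ) i j)) (i j : n) :
    (((X * Y) i j - (1 : Matrix n n ℤ) i j : ℤ) : ZMod 4)
      = ((X i j - (1 : Matrix n n ℤ) i j : ℤ) : ZMod 4)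
        + ((Y i j - (1 : Matrix n n ℤ) i j : ℤ) : ZMod 4) := by
  have h := congrArg (fun M => M i j) (key_id X Y)
  simp only [Matrix.sub_apply, Matrix.add_apply] at h
  have h4 : (4:ℤ) ∣ ((X - 1) * (Y - 1)) i j := by
    rw [Matrix.mul_apply]
    refine Finset.dvd_sum fun k _ => ?_
    have := mul_dvd_mul (by simpa using hX i k) (by simpa using hY k j)
    simpa using this
  have h5 : ((X * Y) i j - (1 : Matrix n n ℤ) i j : ℤ)
      = ((X - 1) * (Y - 1)) i j + (X i j - (1 : Matrix n n ℤ) i j)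
        + (Y i j - (1 : Matrix n n ℤ) i j) := by
    rw [h]
  rw [h5]
  push_cast
  rw [(ZMod.intCast_zmod_eq_zero_iff_dvd _ 4).2 h4]
  ring

end Mat

/-! ### symplectic generators -/

lemma sp_mul {g : ℕ} {X Y : Matrix (Fin g ⊕ Fin g) (Fin g ⊕ Fin g) ℤ}
    (hX : X ∈ SpSet g) (hY : Y ∈ SpSet g) : X * Y ∈ SpSet g := by
  simp only [SpSet, Set.mem_setOf_eq] at *
  have h : (X*Y)ᵀ * Jmat g ℤ * (X*Y) = Yᵀ * (Xᵀ * Jmat g ℤ * X) * Y := by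
    rw [transpose_mul]; noncomm_ring
  rw [h, hX, hY]

lemma sp_upper {g : ℕ} (b : Matrix (Fin g) (Fin g) ℤ) (hb : bᵀ = b) :
    fromBlocks 1 b 0 1 ∈ SpSet g := by
  simp [SpSet, Jmat, Matrix.fromBlocks_transpose, Matrix.fromBlocks_multiply, hb]

lemma sp_lower {g : ℕ} (c : Matrix (Fin g) (Fin g) ℤ) (hc : cᵀ = c) :
    fromBlocks 1 0 c 1 ∈ SpSet g := by
  simp [SpSet, Jmat, Matrix.fromBlocks_transpose, Matrix.fromBlocks_multiply, hc]

lemma sp_diag {g : ℕ} (U : Matrix (Fin g) (Fin g) ℤ) (hU : Uᵀ * U = 1) :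
    fromBlocks U 0 0 U ∈ SpSet g := by
  simp [SpSet, Jmat, Matrix.fromBlocks_transpose, Matrix.fromBlocks_multiply, hU]

/-! ### the invariant map -/

def ent (g : ℕ) (X : Matrix (Fin g ⊕ Fin g) (Fin g ⊕ Fin g) ℤ) (i j : Fin g ⊕ Fin g) : ZMod 4 :=
  ((X i j - (1 : Matrix (Fin g ⊕ Fin g) (Fin g ⊕ Fin g) ℤ) i j : ℤ) : ZMod 4)

def fmap (g : ℕ) (X : Matrix (Fin g ⊕ Fin g) (Fin g ⊕ Fin g) ℤ) :
    (Fin g → ZMod 2) × (Fin g → ZMod 2) × ZMod 2 :=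
  ⟨fun i => hh (ent g X (Sum.inl i) (Sum.inr i)),
   fun i => hh (ent g X (Sum.inr i) (Sum.inl i)),
   ∑ i, hh (ent g X (Sum.inl i) (Sum.inl i))⟩

lemma ent_even {g : ℕ} {X : Matrix (Fin g ⊕ Fin g) (Fin g ⊕ Fin g) ℤ}
    (hX : X ∈ GammaSet g 2) (i j : Fin g ⊕ Fin g) : ent g X i j = 0 ∨ ent g X i j = 2 := by
  obtain ⟨y, hy⟩ := hX.2 i j
  unfold ent
  rw [hy]; push_cast; exact two_mul_zmod4 _

lemma gamma_mul {g : ℕ} {X Y : Matrix (Fin g ⊕ Fin g) (Fin g ⊕ Fin g) ℤ}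
    (hX : X ∈ GammaSet g 2) (hY : Y ∈ GammaSet g 2) : X * Y ∈ GammaSet g 2 :=
  ⟨sp_mul hX.1 hY.1, entry_dvd_mul hX.2 hY.2⟩

lemma fmap_mul {g : ℕ} {X Y : Matrix (Fin g ⊕ Fin g) (Fin g ⊕ Fin g) ℤ}
    (hX : X ∈ GammaSet g 2) (hY : Y ∈ GammaSet g 2) :
    fmap g (X * Y) = fmap g X + fmap g Y := by
  have comp : ∀ i j, hh (ent g (X*Y) i j) = hh (ent g X i j) + hh (ent g Y i j) := by
    intro i j
    unfold ent
    rw [entry_mod4 hX.2 hY.2 i j]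
    exact hh_add (ent_even hX i j) (ent_even hY i j)
  simp only [fmap, Prod.mk_add_mk, Prod.mk.injEq]
  refine ⟨funext fun i => comp _ _, funext fun i => comp _ _, ?_⟩
  calc ∑ i, hh (ent g (X*Y) (Sum.inl i) (Sum.inl i))
      = ∑ i, (hh (ent g X (Sum.inl i) (Sum.inl i)) + hh (ent g Y (Sum.inl i) (Sum.inl i))) :=
        Finset.sum_congr rfl (fun i _ => comp _ _)
    _ = _ := Finset.sum_add_distrib


lemma fmap_zero_iff {g : ℕ} {X : Matrix (Fin g ⊕ Fin g) (Fin g ⊕ Fin g) ℤ}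
    (hX : X ∈ GammaSet g 2) : fmap g X = 0 ↔ X ∈ KSet g := by
  have oneLL : ∀ i j : Fin g, (1 : Matrix (Fin g ⊕ Fin g) (Fin g ⊕ Fin g) ℤ) (Sum.inl i) (Sum.inl j)
      = (1 : Matrix (Fin g) (Fin g) ℤ) i j := by intro i j; simp [Matrix.one_apply]
  have oneRR : ∀ i j : Fin g, (1 : Matrix (Fin g ⊕ Fin g) (Fin g ⊕ Fin g) ℤ) (Sum.inr i) (Sum.inr j)
      = (1 : Matrix (Fin g) (Fin g) ℤ) i j := by intro i j; simp [Matrix.one_apply]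
  have oneLR : ∀ i j : Fin g, (1 : Matrix (Fin g ⊕ Fin g) (Fin g ⊕ Fin g) ℤ) (Sum.inl i) (Sum.inr j) = 0 := by
    intro i j; simp [Matrix.one_apply]
  have oneRL : ∀ i j : Fin g, (1 : Matrix (Fin g ⊕ Fin g) (Fin g ⊕ Fin g) ℤ) (Sum.inr i) (Sum.inl j) = 0 := by
    intro i j; simp [Matrix.one_apply]
  constructor
  · intro h
    obtain ⟨h1, h2, h3⟩ : _ ∧ _ ∧ _ := by
      simpa [fmap, Prod.ext_iff, funext_iff] using h
    set a : Matrix (Fin g) (Fin g) ℤ := fun i j =>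
      (X (Sum.inl i) (Sum.inl j) - (1 : Matrix (Fin g) (Fin g) ℤ) i j) / 2 with ha_def
    set b : Matrix (Fin g) (Fin g) ℤ := fun i j => X (Sum.inl i) (Sum.inr j) / 2 with hb_def
    set c : Matrix (Fin g) (Fin g) ℤ := fun i j => X (Sum.inr i) (Sum.inl j) / 2 with hc_def
    set d : Matrix (Fin g) (Fin g) ℤ := fun i j =>
      (X (Sum.inr i) (Sum.inr j) - (1 : Matrix (Fin g) (Fin g) ℤ) i j) / 2 with hd_def
    have ha : ∀ i j, 2 * a i j = X (Sum.inl i) (Sum.inl j) - (1 : Matrix (Fin g) (Fin g) ℤ) i j := by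
      intro i j
      have hdvd := hX.2 (Sum.inl i) (Sum.inl j); rw [oneLL] at hdvd
      exact Int.mul_ediv_cancel' hdvd
    have hb : ∀ i j, 2 * b i j = X (Sum.inl i) (Sum.inr j) := by
      intro i j
      have hdvd := hX.2 (Sum.inl i) (Sum.inr j); rw [oneLR, sub_zero] at hdvd
      exact Int.mul_ediv_cancel' hdvd
    have hc : ∀ i j, 2 * c i j = X (Sum.inr i) (Sum.inl j) := by
      intro i j
      have hdvd := hX.2 (Sum.inr i) (Sum.inl j); rw [oneRL, sub_zero] at hdvd
      exact Int.mul_ediv_cancel' hdvd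
    have hd : ∀ i j, 2 * d i j = X (Sum.inr i) (Sum.inr j) - (1 : Matrix (Fin g) (Fin g) ℤ) i j := by
      intro i j
      have hdvd := hX.2 (Sum.inr i) (Sum.inr j); rw [oneRR] at hdvd
      exact Int.mul_ediv_cancel' hdvd
    have sm2 : ∀ (M : Matrix (Fin g) (Fin g) ℤ) (i j : Fin g), (2 • M) i j = 2 * M i j := by
      intro M i j; simp
    refine ⟨hX.1, a, b, c, d, ?_, ?_, ?_, ?_⟩
    · ext i j
      rcases i with i | i <;> rcases j with j | j <;>
        simp only [Matrix.fromBlocks, Matrix.of_apply, Sum.elim_inl, Sum.elim_inr,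
          Matrix.add_apply, sm2]
      · linarith [ha i j]
      · linarith [hb i j]
      · linarith [hc i j]
      · linarith [hd i j]
    · -- 2 ∣ b i i, from 4 ∣ X (inl i) (inr i)
      intro i
      have he : ent g X (Sum.inl i) (Sum.inr i) = 0 :=
        (hh_zero_iff (ent_even hX _ _)).1 (h1 i)
      have h4 : (4:ℤ) ∣ (X (Sum.inl i) (Sum.inr i) - (1 : Matrix (Fin g ⊕ Fin g) (Fin g ⊕ Fin g) ℤ) (Sum.inl i) (Sum.inr i)) :=
        (ZMod.intCast_zmod_eq_zero_iff_dvd _ 4).1 he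
      rw [oneLR, sub_zero] at h4
      have := hb i i
      omega
    · intro i
      have he : ent g X (Sum.inr i) (Sum.inl i) = 0 :=
        (hh_zero_iff (ent_even hX _ _)).1 (h2 i)
      have h4 : (4:ℤ) ∣ (X (Sum.inr i) (Sum.inl i) - (1 : Matrix (Fin g ⊕ Fin g) (Fin g ⊕ Fin g) ℤ) (Sum.inr i) (Sum.inl i)) :=
        (ZMod.intCast_zmod_eq_zero_iff_dvd _ 4).1 he
      rw [oneRL, sub_zero] at h4
      have := hc i i
      omega
    · -- 2 ∣ trace a
      have hcasts : ∀ i : Fin g, hh (ent g X (Sum.inl i) (Sum.inl i)) = ((a i i : ℤ) : ZMod 2) := by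
        intro i
        have : ent g X (Sum.inl i) (Sum.inl i) = ((2 * a i i : ℤ) : ZMod 4) := by
          unfold ent; rw [ha, oneLL]
        rw [this, hh_two_mul]
      have htr : ((Matrix.trace a : ℤ) : ZMod 2) = 0 := by
        have : Matrix.trace a = ∑ i, a i i := rfl
        rw [this]
        push_cast
        rw [← Finset.sum_congr rfl (fun i _ => hcasts i)]
        exact h3
      exact (ZMod.intCast_zmod_eq_zero_iff_dvd _ 2).1 htr
  · rintro ⟨hsp, a, b, c, d, hXeq, hbd, hcd, htr⟩
    have sm2 : ∀ (M : Matrix (Fin g) (Fin g) ℤ) (i j : Fin g), (2 • M) i j = 2 * M i j := by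
      intro M i j; simp
    have eb : ∀ i : Fin g, ent g X (Sum.inl i) (Sum.inr i) = ((2 * b i i : ℤ) : ZMod 4) := by
      intro i; unfold ent
      rw [hXeq, oneLR, sub_zero, Matrix.fromBlocks_apply₁₂, sm2]
    have ec : ∀ i : Fin g, ent g X (Sum.inr i) (Sum.inl i) = ((2 * c i i : ℤ) : ZMod 4) := by
      intro i; unfold ent
      rw [hXeq, oneRL, sub_zero, Matrix.fromBlocks_apply₂₁, sm2]
    have ea : ∀ i : Fin g, ent g X (Sum.inl i) (Sum.inl i) = ((2 * a i i : ℤ) : ZMod 4) := by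
      intro i; unfold ent
      rw [hXeq, oneLL, Matrix.fromBlocks_apply₁₁, Matrix.add_apply, sm2, Matrix.one_apply_eq]
      push_cast
      ring
    simp only [fmap, Prod.ext_iff, funext_iff]
    refine ⟨fun i => ?_, fun i => ?_, ?_⟩
    · rw [eb, hh_two_mul]
      simpa using (ZMod.intCast_zmod_eq_zero_iff_dvd (b i i) 2).2 (hbd i)
    · rw [ec, hh_two_mul]
      simpa using (ZMod.intCast_zmod_eq_zero_iff_dvd (c i i) 2).2 (hcd i)
    · have : ∑ i, hh (ent g X (Sum.inl i) (Sum.inl i)) = ((Matrix.trace a : ℤ) : ZMod 2) := by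
        have htr' : Matrix.trace a = ∑ i, a i i := rfl
        rw [htr']
        push_cast
        exact Finset.sum_congr rfl (fun i _ => by rw [ea, hh_two_mul])
      rw [this]
      simpa using (ZMod.intCast_zmod_eq_zero_iff_dvd (Matrix.trace a) 2).2 htr


lemma fmap_surj {g : ℕ} (hg : 1 ≤ g) (v : (Fin g → ZMod 2) × (Fin g → ZMod 2) × ZMod 2) :
    ∃ X ∈ GammaSet g 2, fmap g X = v := by
  obtain ⟨β, γ, t⟩ := v
  set i0 : Fin g := ⟨0, hg⟩ with hi0
  set u : ℤ := lf t with hu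
  set b : Matrix (Fin g) (Fin g) ℤ := Matrix.diagonal (fun i => lf (β i)) with hb
  set c : Matrix (Fin g) (Fin g) ℤ := Matrix.diagonal (fun i => lf (γ i)) with hc
  set U : Matrix (Fin g) (Fin g) ℤ :=
    Matrix.diagonal (fun i => if i = i0 then 1 - 2 * u else 1) with hU
  set P : Matrix (Fin g ⊕ Fin g) (Fin g ⊕ Fin g) ℤ := fromBlocks 1 (2 • b) 0 1 with hP
  set Q : Matrix (Fin g ⊕ Fin g) (Fin g ⊕ Fin g) ℤ := fromBlocks 1 0 (2 • c) 1 with hQ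
  set R : Matrix (Fin g ⊕ Fin g) (Fin g ⊕ Fin g) ℤ := fromBlocks U 0 0 U with hR
  have oneLL : ∀ i j : Fin g, (1 : Matrix (Fin g ⊕ Fin g) (Fin g ⊕ Fin g) ℤ) (Sum.inl i) (Sum.inl j)
      = (1 : Matrix (Fin g) (Fin g) ℤ) i j := by intro i j; simp [Matrix.one_apply]
  have oneRR : ∀ i j : Fin g, (1 : Matrix (Fin g ⊕ Fin g) (Fin g ⊕ Fin g) ℤ) (Sum.inr i) (Sum.inr j)
      = (1 : Matrix (Fin g) (Fin g) ℤ) i j := by intro i j; simp [Matrix.one_apply]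
  have oneLR : ∀ i j : Fin g, (1 : Matrix (Fin g ⊕ Fin g) (Fin g ⊕ Fin g) ℤ) (Sum.inl i) (Sum.inr j) = 0 := by
    intro i j; simp [Matrix.one_apply]
  have oneRL : ∀ i j : Fin g, (1 : Matrix (Fin g ⊕ Fin g) (Fin g ⊕ Fin g) ℤ) (Sum.inr i) (Sum.inl j) = 0 := by
    intro i j; simp [Matrix.one_apply]
  have sm2 : ∀ (M : Matrix (Fin g) (Fin g) ℤ) (i j : Fin g), (2 • M) i j = 2 * M i j := by
    intro M i j; simp
  -- Gamma membership of the generators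
  have hPGamma : P ∈ GammaSet g 2 := by
    refine ⟨sp_upper _ (by rw [Matrix.transpose_smul, Matrix.diagonal_transpose]), ?_⟩
    intro i j
    rcases i with i | i <;> rcases j with j | j
    · rw [hP, Matrix.fromBlocks_apply₁₁, oneLL]; simp
    · rw [hP, Matrix.fromBlocks_apply₁₂, oneLR, sub_zero, sm2]; exact dvd_mul_right 2 _
    · rw [hP, Matrix.fromBlocks_apply₂₁, oneRL]; simp
    · rw [hP, Matrix.fromBlocks_apply₂₂, oneRR]; simp
  have hQGamma : Q ∈ GammaSet g 2 := by
    refine ⟨sp_lower _ (by rw [Matrix.transpose_smul, Matrix.diagonal_transpose]), ?_⟩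
    intro i j
    rcases i with i | i <;> rcases j with j | j
    · rw [hQ, Matrix.fromBlocks_apply₁₁, oneLL]; simp
    · rw [hQ, Matrix.fromBlocks_apply₁₂, oneLR]; simp
    · rw [hQ, Matrix.fromBlocks_apply₂₁, oneRL, sub_zero, sm2]; exact dvd_mul_right 2 _
    · rw [hQ, Matrix.fromBlocks_apply₂₂, oneRR]; simp
  have hUU : Uᵀ * U = 1 := by
    have hdf : (fun i : Fin g => (if i = i0 then 1 - 2 * u else 1) * (if i = i0 then 1 - 2 * u else 1))
        = fun _ : Fin g => (1 : ℤ) := by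
      funext i
      split
      · have h := lf_sq t
        show (1 - 2 * lf t) * (1 - 2 * lf t) = 1
        linear_combination (4 : ℤ) * h
      · ring
    rw [hU, Matrix.diagonal_transpose, Matrix.diagonal_mul_diagonal, hdf, Matrix.diagonal_one]
  have hUdvd : ∀ i j : Fin g, (2:ℤ) ∣ (U i j - (1 : Matrix (Fin g) (Fin g) ℤ) i j) := by
    intro i j
    rcases eq_or_ne i j with rfl | hij
    · rw [hU, Matrix.diagonal_apply_eq, Matrix.one_apply_eq]
      split
      · exact ⟨-u, by ring⟩
      · simp
    · rw [hU, Matrix.diagonal_apply_ne _ hij, Matrix.one_apply_ne hij]; simp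
  have hRGamma : R ∈ GammaSet g 2 := by
    refine ⟨sp_diag U hUU, ?_⟩
    intro i j
    rcases i with i | i <;> rcases j with j | j
    · rw [hR, Matrix.fromBlocks_apply₁₁, oneLL]; exact hUdvd i j
    · rw [hR, Matrix.fromBlocks_apply₁₂, oneLR]; simp
    · rw [hR, Matrix.fromBlocks_apply₂₁, oneRL]; simp
    · rw [hR, Matrix.fromBlocks_apply₂₂, oneRR]; exact hUdvd i j
  refine ⟨P * (Q * R), gamma_mul hPGamma (gamma_mul hQGamma hRGamma), ?_⟩
  rw [fmap_mul hPGamma (gamma_mul hQGamma hRGamma), fmap_mul hQGamma hRGamma]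
  have hfP : fmap g P = ⟨β, 0, 0⟩ := by
    simp only [fmap, Prod.mk.injEq]
    refine ⟨funext fun i => ?_, funext fun i => ?_, ?_⟩
    · have : ent g P (Sum.inl i) (Sum.inr i) = ((2 * lf (β i) : ℤ) : ZMod 4) := by
        unfold ent
        rw [oneLR, sub_zero, hP, Matrix.fromBlocks_apply₁₂]
        norm_num [hb, Matrix.diagonal_apply_eq]
      rw [this, hh_two_mul, lf_cast]
    · have : ent g P (Sum.inr i) (Sum.inl i) = 0 := by
        unfold ent
        rw [oneRL, sub_zero, hP, Matrix.fromBlocks_apply₂₁]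
        simp
      rw [this]; rfl
    · have : ∀ i : Fin g, ent g P (Sum.inl i) (Sum.inl i) = 0 := by
        intro i; unfold ent
        rw [oneLL, hP, Matrix.fromBlocks_apply₁₁]
        simp
      rw [Finset.sum_congr rfl (fun i _ => by rw [this i])]
      exact Finset.sum_const_zero
  have hfQ : fmap g Q = ⟨0, γ, 0⟩ := by
    simp only [fmap, Prod.mk.injEq]
    refine ⟨funext fun i => ?_, funext fun i => ?_, ?_⟩
    · have : ent g Q (Sum.inl i) (Sum.inr i) = 0 := by
        unfold ent
        rw [oneLR, sub_zero, hQ, Matrix.fromBlocks_apply₁₂]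
        simp
      rw [this]; rfl
    · have : ent g Q (Sum.inr i) (Sum.inl i) = ((2 * lf (γ i) : ℤ) : ZMod 4) := by
        unfold ent
        rw [oneRL, sub_zero, hQ, Matrix.fromBlocks_apply₂₁]
        norm_num [hc, Matrix.diagonal_apply_eq]
      rw [this, hh_two_mul, lf_cast]
    · have : ∀ i : Fin g, ent g Q (Sum.inl i) (Sum.inl i) = 0 := by
        intro i; unfold ent
        rw [oneLL, hQ, Matrix.fromBlocks_apply₁₁]
        simp
      rw [Finset.sum_congr rfl (fun i _ => by rw [this i])]
      exact Finset.sum_const_zero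
  have hfR : fmap g R = ⟨0, 0, t⟩ := by
    simp only [fmap, Prod.mk.injEq]
    refine ⟨funext fun i => ?_, funext fun i => ?_, ?_⟩
    · have : ent g R (Sum.inl i) (Sum.inr i) = 0 := by
        unfold ent
        rw [oneLR, sub_zero, hR, Matrix.fromBlocks_apply₁₂]
        simp
      rw [this]; rfl
    · have : ent g R (Sum.inr i) (Sum.inl i) = 0 := by
        unfold ent
        rw [oneRL, sub_zero, hR, Matrix.fromBlocks_apply₂₁]
        simp
      rw [this]; rfl
    · have key : ∀ i : Fin g, ent g R (Sum.inl i) (Sum.inl i)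
          = ((2 * (if i = i0 then -u else 0) : ℤ) : ZMod 4) := by
        intro i; unfold ent
        rw [oneLL, hR, Matrix.fromBlocks_apply₁₁, hU, Matrix.diagonal_apply_eq,
          Matrix.one_apply_eq]
        split <;> push_cast <;> ring
      calc ∑ i, hh (ent g R (Sum.inl i) (Sum.inl i))
          = ∑ i, ((if i = i0 then (-u : ℤ) else 0 : ℤ) : ZMod 2) := by
            refine Finset.sum_congr rfl fun i _ => ?_
            rw [key i, hh_two_mul]
        _ = ∑ i, (if i = i0 then ((-u : ℤ) : ZMod 2) else 0) := by
            refine Finset.sum_congr rfl fun i _ => ?_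
            split <;> simp
        _ = ((-u : ℤ) : ZMod 2) := by rw [Finset.sum_ite_eq' Finset.univ i0]; simp
        _ = t := by
            push_cast
            rw [show ∀ x : ZMod 2, -x = x from by decide]
            rw [lf_cast]
  rw [hfP, hfQ, hfR]
  simp

end Stmt6Aux

/-- The quotient `Γ(2g,2)/𝔎` is an elementary abelian `2`-group of order `2^(2g+1)`:
there is a commutative group `H` of exponent `2` and order `2^(2g+1)`, together with a
surjective multiplicative map from `Γ(2g,2)` onto `H` whose "kernel" is exactly `𝔎`. -/
theorem stmt6 (g : ℕ) (hg : 1 ≤ g) :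
    ∃ (H : Type) (_ : CommGroup H)
      (f : Matrix (Fin g ⊕ Fin g) (Fin g ⊕ Fin g) ℤ → H),
      (∀ X ∈ GammaSet g 2, ∀ Y ∈ GammaSet g 2, f (X * Y) = f X * f Y) ∧
      (∀ X ∈ GammaSet g 2, (f X = 1 ↔ X ∈ KSet g)) ∧
      (∀ h : H, ∃ X ∈ GammaSet g 2, f X = h) ∧
      (∀ h : H, h * h = 1) ∧
      Nat.card H = 2 ^ (2 * g + 1) := by
  refine ⟨Multiplicative ((Fin g → ZMod 2) × (Fin g → ZMod 2) × ZMod 2), inferInstance,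
    fun X => Multiplicative.ofAdd (Stmt6Aux.fmap g X), ?_, ?_, ?_, ?_, ?_⟩
  · intro X hX Y hY
    show Multiplicative.ofAdd (Stmt6Aux.fmap g (X * Y)) = _
    rw [Stmt6Aux.fmap_mul hX hY, ofAdd_add]
  · intro X hX
    rw [show (1 : Multiplicative ((Fin g → ZMod 2) × (Fin g → ZMod 2) × ZMod 2))
        = Multiplicative.ofAdd 0 from rfl]
    rw [Equiv.apply_eq_iff_eq]
    exact Stmt6Aux.fmap_zero_iff hX
  · intro h
    obtain ⟨X, hX, hfX⟩ := Stmt6Aux.fmap_surj hg (Multiplicative.toAdd h)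
    exact ⟨X, hX, by show Multiplicative.ofAdd (Stmt6Aux.fmap g X) = h; rw [hfX]; exact ofAdd_toAdd h⟩
  · intro h
    have key : Multiplicative.toAdd h + Multiplicative.toAdd h = 0 := by
      have z2 : ∀ a : ZMod 2, a + a = 0 := by decide
      refine Prod.ext (funext fun i => z2 _) (Prod.ext (funext fun i => z2 _) (z2 _))
    calc h * h = Multiplicative.ofAdd (Multiplicative.toAdd h + Multiplicative.toAdd h) := rfl
      _ = Multiplicative.ofAdd 0 := by rw [key]
      _ = 1 := rfl
  · rw [Nat.card_congr Multiplicative.toAdd]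
    simp only [Nat.card_eq_fintype_card, Fintype.card_prod, Fintype.card_fun, ZMod.card,
      Fintype.card_fin]
    rw [pow_succ, two_mul, pow_add]
    ring
end

section
/- The map q sending a matrix [[I+2a,2b],[2c,I+2d]] ∈ Γ(2g,2) to Tr(a) + ⟨Diag(b),Diag(c)⟩ modulo 2 (where ⟨·,·⟩ is the standard dot product of the diagonal vectors) is well-defined on the quotient Γ(2g,2)/Γ(2g,4) and defines a quadratic form with respect to the group structure: q(xy) = q(x) + q(y) + b(x,y) where b is a bilinear form. -/
open Matrix

/-- For `X = [[I+2a, 2b], [2c, I+2d]] ∈ Γ(2g,2)`, the quantity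
`Tr a + ⟨Diag b, Diag c⟩ mod 2`, computed from the entries of `X`. -/
def qform (g : ℕ) (X : Matrix (Fin g ⊕ Fin g) (Fin g ⊕ Fin g) ℤ) : ZMod 2 :=
  (((∑ i : Fin g, (X (Sum.inl i) (Sum.inl i) - 1) / 2) +
    ∑ i : Fin g, (X (Sum.inl i) (Sum.inr i) / 2) * (X (Sum.inr i) (Sum.inl i) / 2) : ℤ) : ZMod 2)

namespace Stmt7Aux

variable {g : ℕ}

/-- Entries of `(X - 1)/2` as elements of `ZMod 2`. -/
def D (g : ℕ) (X : Matrix (Fin g ⊕ Fin g) (Fin g ⊕ Fin g) ℤ) (i j : Fin g ⊕ Fin g) : ZMod 2 :=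
  (((X i j - (1 : Matrix (Fin g ⊕ Fin g) (Fin g ⊕ Fin g) ℤ) i j) / 2 : ℤ) : ZMod 2)

lemma two_zero : (2 : ZMod 2) = 0 := by decide

lemma ediv_congr {m n k : ℤ} (h : m = n + 4 * k) :
    ((m / 2 : ℤ) : ZMod 2) = ((n / 2 : ℤ) : ZMod 2) := by
  subst h
  rw [show (4:ℤ) * k = 2 * k * 2 by ring, Int.add_mul_ediv_right n (2*k) (by norm_num)]
  push_cast
  rw [two_zero]
  ring

lemma entry_mul_sub_one (X Y : Matrix (Fin g ⊕ Fin g) (Fin g ⊕ Fin g) ℤ) (i j : Fin g ⊕ Fin g) :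
    (X * Y) i j - (1 : Matrix (Fin g ⊕ Fin g) (Fin g ⊕ Fin g) ℤ) i j =
      (X i j - (1 : Matrix (Fin g ⊕ Fin g) (Fin g ⊕ Fin g) ℤ) i j) +
      (Y i j - (1 : Matrix (Fin g ⊕ Fin g) (Fin g ⊕ Fin g) ℤ) i j) +
      ((X - 1) * (Y - 1)) i j := by
  have h : X * Y - 1 = (X - 1) + (Y - 1) + (X - 1) * (Y - 1) := by noncomm_ring
  have h' := congrFun (congrFun h i) j
  simpa [Matrix.sub_apply, Matrix.add_apply] using h'

/-- Multiplicativity: for `X, Y ∈ Γ(2g,2)`, `D (X*Y) = D X + D Y`. -/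
lemma D_mul {X Y : Matrix (Fin g ⊕ Fin g) (Fin g ⊕ Fin g) ℤ}
    (hX : X ∈ GammaSet g 2) (hY : Y ∈ GammaSet g 2) (i j : Fin g ⊕ Fin g) :
    D g (X * Y) i j = D g X i j + D g Y i j := by
  obtain ⟨a, ha⟩ := hX.2 i j
  obtain ⟨b, hb⟩ := hY.2 i j
  have hP : (4 : ℤ) ∣ ((X - 1) * (Y - 1)) i j := by
    rw [Matrix.mul_apply]
    refine Finset.dvd_sum fun k _ => ?_
    have h1 : (2 : ℤ) ∣ (X - 1) i k := by simpa [Matrix.sub_apply] using hX.2 i k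
    have h2 : (2 : ℤ) ∣ (Y - 1) k j := by simpa [Matrix.sub_apply] using hY.2 k j
    exact mul_dvd_mul h1 h2
  obtain ⟨c, hc⟩ := hP
  have key := entry_mul_sub_one X Y i j
  rw [ha, hb, hc] at key
  unfold D
  rw [key, ha, hb,
    show 2 * a + 2 * b + 4 * c = 2 * (a + b) + 4 * c by ring]
  rw [ediv_congr rfl, Int.mul_ediv_cancel_left _ (by norm_num : (2:ℤ) ≠ 0),
    Int.mul_ediv_cancel_left _ (by norm_num : (2:ℤ) ≠ 0),
    Int.mul_ediv_cancel_left _ (by norm_num : (2:ℤ) ≠ 0)]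
  push_cast
  ring

/-- Well-definedness: multiplying by `Z ∈ Γ(2g,4)` does not change `D`. -/
lemma D_well {X Z : Matrix (Fin g ⊕ Fin g) (Fin g ⊕ Fin g) ℤ}
    (hZ : Z ∈ GammaSet g 4) (i j : Fin g ⊕ Fin g) :
    D g (X * Z) i j = D g X i j := by
  have h : X * Z - 1 = (X - 1) + X * (Z - 1) := by noncomm_ring
  have h' := congrFun (congrFun h i) j
  simp only [Matrix.sub_apply, Matrix.add_apply] at h'
  have hP : (4 : ℤ) ∣ (X * (Z - 1)) i j := by
    rw [Matrix.mul_apply]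
    refine Finset.dvd_sum fun k _ => ?_
    have h2 : (4 : ℤ) ∣ (Z - 1) k j := by simpa [Matrix.sub_apply] using hZ.2 k j
    exact Dvd.dvd.mul_left h2 _
  obtain ⟨c, hc⟩ := hP
  unfold D
  exact ediv_congr (by rw [h', hc])

lemma one_apply_lr (i : Fin g) :
    (1 : Matrix (Fin g ⊕ Fin g) (Fin g ⊕ Fin g) ℤ) (Sum.inl i) (Sum.inr i) = 0 :=
  Matrix.one_apply_ne (by simp)

lemma one_apply_rl (i : Fin g) :
    (1 : Matrix (Fin g ⊕ Fin g) (Fin g ⊕ Fin g) ℤ) (Sum.inr i) (Sum.inl i) = 0 :=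
  Matrix.one_apply_ne (by simp)

/-- `qform` in terms of `D`. -/
lemma qform_eq (X : Matrix (Fin g ⊕ Fin g) (Fin g ⊕ Fin g) ℤ) :
    qform g X = (∑ i : Fin g, D g X (Sum.inl i) (Sum.inl i)) +
      ∑ i : Fin g, D g X (Sum.inl i) (Sum.inr i) * D g X (Sum.inr i) (Sum.inl i) := by
  unfold qform D
  push_cast
  congr 1
  · exact Finset.sum_congr rfl fun i _ => by rw [Matrix.one_apply_eq]
  · exact Finset.sum_congr rfl fun i _ => by rw [one_apply_lr, one_apply_rl, sub_zero, sub_zero]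

/-- The bilinear form `b`. -/
def bmap (g : ℕ) (X Y : Matrix (Fin g ⊕ Fin g) (Fin g ⊕ Fin g) ℤ) : ZMod 2 :=
  ∑ i : Fin g, (D g X (Sum.inl i) (Sum.inr i) * D g Y (Sum.inr i) (Sum.inl i) +
    D g Y (Sum.inl i) (Sum.inr i) * D g X (Sum.inr i) (Sum.inl i))

end Stmt7Aux

open Stmt7Aux in
/-- `q` is well defined on the quotient `Γ(2g,2)/Γ(2g,4)` and is a quadratic form
with respect to the group structure: `q(xy) = q(x) + q(y) + b(x,y)` for a map `b`
which is well defined on the quotient and biadditive. -/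
theorem stmt7 (g : ℕ) (hg : 1 ≤ g) :
    (∀ X ∈ GammaSet g 2, ∀ Y ∈ GammaSet g 2,
      (∃ Z ∈ GammaSet g 4, Y = X * Z) → qform g X = qform g Y) ∧
    ∃ b : Matrix (Fin g ⊕ Fin g) (Fin g ⊕ Fin g) ℤ →
          Matrix (Fin g ⊕ Fin g) (Fin g ⊕ Fin g) ℤ → ZMod 2,
      (∀ X ∈ GammaSet g 2, ∀ X' ∈ GammaSet g 2, ∀ Y ∈ GammaSet g 2,
        (∃ Z ∈ GammaSet g 4, X' = X * Z) → b X Y = b X' Y ∧ b Y X = b Y X') ∧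
      (∀ X ∈ GammaSet g 2, ∀ Y ∈ GammaSet g 2, ∀ Z ∈ GammaSet g 2,
        b (X * Y) Z = b X Z + b Y Z ∧ b Z (X * Y) = b Z X + b Z Y) ∧
      (∀ X ∈ GammaSet g 2, ∀ Y ∈ GammaSet g 2,
        qform g (X * Y) = qform g X + qform g Y + b X Y) := by
  constructor
  · rintro X hX Y hY ⟨Z, hZ, rfl⟩
    rw [qform_eq, qform_eq]
    simp only [D_well hZ]
  · refine ⟨bmap g, ?_, ?_, ?_⟩
    · rintro X hX X' hX' Y hY ⟨Z, hZ, rfl⟩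
      unfold bmap
      simp only [D_well hZ, and_self]
    · intro X hX Y hY Z hZ
      constructor
      · unfold bmap
        rw [← Finset.sum_add_distrib]
        refine Finset.sum_congr rfl fun i _ => ?_
        rw [D_mul hX hY, D_mul hX hY]
        ring
      · unfold bmap
        rw [← Finset.sum_add_distrib]
        refine Finset.sum_congr rfl fun i _ => ?_
        rw [D_mul hX hY, D_mul hX hY]
        ring
    · intro X hX Y hY
      rw [qform_eq, qform_eq, qform_eq]
      unfold bmap
      simp only [D_mul hX hY]
      rw [Finset.sum_add_distrib]
      have : ∀ i : Fin g,
          (D g X (Sum.inl i) (Sum.inr i) + D g Y (Sum.inl i) (Sum.inr i)) *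
            (D g X (Sum.inr i) (Sum.inl i) + D g Y (Sum.inr i) (Sum.inl i)) =
          D g X (Sum.inl i) (Sum.inr i) * D g X (Sum.inr i) (Sum.inl i) +
          D g Y (Sum.inl i) (Sum.inr i) * D g Y (Sum.inr i) (Sum.inl i) +
          (D g X (Sum.inl i) (Sum.inr i) * D g Y (Sum.inr i) (Sum.inl i) +
           D g Y (Sum.inl i) (Sum.inr i) * D g X (Sum.inr i) (Sum.inl i)) :=
        fun i => by ring
      rw [Finset.sum_congr rfl fun i _ => this i, Finset.sum_add_distrib,
        Finset.sum_add_distrib]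
      ring
end

section
/- The map from sp(2g,ℤ/2) to ℤ/2 sending [[a,b],[c,a^t]] to Tr(a) + ⟨Diag(b),Diag(c)⟩ is a quadratic form whose associated bilinear form is b(([[a,b],[c,a^t]]),([[a',b'],[c',a'^t]])) = ⟨Diag(b),Diag(c')⟩ + ⟨Diag(b'),Diag(c)⟩, and both the quadratic form and the bilinear form are invariant under the conjugation action of Sp(2g,2). -/
/-!
Write `Y ∈ sp(2g, 𝔽₂)` as `[[a, b], [c, aᵀ]]` with `b`, `c` symmetric. In characteristic 2 the
trace of a product of two symmetric matrices only sees their diagonals, and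
`tr (a a') + tr (aᵀ a'ᵀ) = 0`; hence `b(Y, Y') = tr (Y Y')`, which is invariant under conjugation.

For `q`, lift `Y` entrywise to `Ỹ` over `ℤ/4`. The same computation gives `tr (Ỹ²) = 2 q(Y)`.
Modulo 4, `tr (Ỹ²)` depends only on `Y` (replacing `Ỹ` by `Ỹ + 2D` changes it by a multiple
of 4), and any lift of an invertible `P` is invertible over the local ring `ℤ/4`. So
`2 q(P Y P⁻¹) = tr ((P̃ Ỹ P̃⁻¹)²) = tr (Ỹ²) = 2 q(Y)`.
-/

open Matrix

/-- The symplectic Lie algebra `sp(2g, 𝔽₂)`. -/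
def spSet2 (g : ℕ) : Set (Matrix (Fin g ⊕ Fin g) (Fin g ⊕ Fin g) (ZMod 2)) :=
  {Y | Jmat g (ZMod 2) * Y + Yᵀ * Jmat g (ZMod 2) = 0}

/-- `q([[a,b],[c,aᵀ]]) = Tr a + ⟨Diag b, Diag c⟩` on `sp(2g,2)`. -/
def qsp (g : ℕ) (Y : Matrix (Fin g ⊕ Fin g) (Fin g ⊕ Fin g) (ZMod 2)) : ZMod 2 :=
  (∑ i : Fin g, Y (Sum.inl i) (Sum.inl i)) +
    ∑ i : Fin g, Y (Sum.inl i) (Sum.inr i) * Y (Sum.inr i) (Sum.inl i)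

/-- The associated bilinear form
`b(Y, Y') = ⟨Diag b, Diag c'⟩ + ⟨Diag b', Diag c⟩`. -/
def bsp (g : ℕ) (Y Y' : Matrix (Fin g ⊕ Fin g) (Fin g ⊕ Fin g) (ZMod 2)) : ZMod 2 :=
  (∑ i : Fin g, Y (Sum.inl i) (Sum.inr i) * Y' (Sum.inr i) (Sum.inl i)) +
    ∑ i : Fin g, Y' (Sum.inl i) (Sum.inr i) * Y (Sum.inr i) (Sum.inl i)

section CharTwo

variable {n R : Type*} [Fintype n] [Ring R] [CharP R 2]

theorem CharTwo.sum_sum_eq_sum_diag_of_symm (x : n → n → R) (hx : ∀ i j, x i j = x j i) :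
    ∑ i, ∑ j, x i j = ∑ i, x i i := by
  classical
  have hoff : ∑ p : n × n, (if p.1 = p.2 then 0 else x p.1 p.2) = 0 := by
    refine Finset.sum_ninvolution Prod.swap (fun p => ?_)
      (fun p hp hswap => hp (if_pos (congrArg Prod.snd hswap))) (fun _ => Finset.mem_univ _)
      Prod.swap_swap
    by_cases h : p.1 = p.2
    · simp [h]
    · simp [h, Ne.symm h, hx p.2 p.1, CharTwo.add_self_eq_zero]
  calc ∑ i, ∑ j, x i j
      = ∑ p : n × n, ((if p.1 = p.2 then x p.1 p.2 else 0)
          + (if p.1 = p.2 then 0 else x p.1 p.2)) := by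
        rw [← Finset.univ_product_univ, Finset.sum_product]
        exact Finset.sum_congr rfl fun i _ => Finset.sum_congr rfl fun j _ => by
          split_ifs <;> simp
    _ = ∑ i, x i i := by
        rw [Finset.sum_add_distrib, hoff, add_zero, ← Finset.univ_product_univ,
          Finset.sum_product]
        simp

theorem CharTwo.trace_mul_eq_sum_diag_mul (A B : Matrix n n R)
    (h : ∀ i j, A i j * B j i = A j i * B i j) :
    trace (A * B) = ∑ i, A i i * B i i :=
  CharTwo.sum_sum_eq_sum_diag_of_symm _ h

end CharTwo

theorem ZMod.trace_mul_self_eq_trace {n : Type*} [Fintype n] (A : Matrix n n (ZMod 2)) :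
    trace (A * A) = trace A := by
  rw [CharTwo.trace_mul_eq_sum_diag_mul A A fun _ _ => mul_comm _ _]
  exact Finset.sum_congr rfl fun i _ => by simpa [sq] using ZMod.pow_card (A i i)

theorem Matrix.trace_fromBlocks {m n R : Type*} [Fintype m] [Fintype n] [AddCommMonoid R]
    (A : Matrix m m R) (B : Matrix m n R) (C : Matrix n m R) (D : Matrix n n R) :
    trace (fromBlocks A B C D) = trace A + trace D := by
  simp [trace, Fintype.sum_sum_type]

theorem Jmat_mul_add_transpose_mul_Jmat {g : ℕ} {R : Type*} [CommRing R]
    (A B C D : Matrix (Fin g) (Fin g) R) :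
    Jmat g R * fromBlocks A B C D + (fromBlocks A B C D)ᵀ * Jmat g R =
      fromBlocks (C - Cᵀ) (D + Aᵀ) (-(A + Dᵀ)) (Bᵀ - B) := by
  simp only [Jmat, fromBlocks_transpose, fromBlocks_multiply, fromBlocks_add]
  congr 1 <;> noncomm_ring

theorem exists_fromBlocks_of_mem_spSet2 {g : ℕ}
    {Y : Matrix (Fin g ⊕ Fin g) (Fin g ⊕ Fin g) (ZMod 2)}
    (hY : Y ∈ spSet2 g) :
    ∃ A B C : Matrix (Fin g) (Fin g) (ZMod 2), B.IsSymm ∧ C.IsSymm ∧ Y = fromBlocks A B C Aᵀ := by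
  change _ = 0 at hY
  rw [← fromBlocks_toBlocks Y, Jmat_mul_add_transpose_mul_Jmat,
    ← fromBlocks_zero, fromBlocks_inj] at hY
  obtain ⟨hC, hDA, -, hB⟩ := hY
  refine ⟨Y.toBlocks₁₁, Y.toBlocks₁₂, Y.toBlocks₂₁, sub_eq_zero.1 hB, (sub_eq_zero.1 hC).symm, ?_⟩
  conv_lhs => rw [← fromBlocks_toBlocks Y, eq_neg_of_add_eq_zero_left hDA]
  congr 1
  ext i j
  exact ZMod.neg_eq_self_mod_two _

section Forms

variable {g : ℕ}

theorem qsp_fromBlocks (A B C D : Matrix (Fin g) (Fin g) (ZMod 2)) :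
    qsp g (fromBlocks A B C D) = trace A + ∑ i, B i i * C i i :=
  rfl

theorem bsp_fromBlocks (A B C D A' B' C' D' : Matrix (Fin g) (Fin g) (ZMod 2)) :
    bsp g (fromBlocks A B C D) (fromBlocks A' B' C' D') =
      ∑ i, B i i * C' i i + ∑ i, B' i i * C i i :=
  rfl

theorem bsp_comm (Y Y' : Matrix (Fin g ⊕ Fin g) (Fin g ⊕ Fin g) (ZMod 2)) :
    bsp g Y Y' = bsp g Y' Y :=
  add_comm _ _

theorem bsp_add_left (Y₁ Y₂ Y₃ : Matrix (Fin g ⊕ Fin g) (Fin g ⊕ Fin g) (ZMod 2)) :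
    bsp g (Y₁ + Y₂) Y₃ = bsp g Y₁ Y₃ + bsp g Y₂ Y₃ := by
  simp only [bsp, Matrix.add_apply, add_mul, mul_add, Finset.sum_add_distrib]
  ring

theorem bsp_add_right (Y₁ Y₂ Y₃ : Matrix (Fin g ⊕ Fin g) (Fin g ⊕ Fin g) (ZMod 2)) :
    bsp g Y₃ (Y₁ + Y₂) = bsp g Y₃ Y₁ + bsp g Y₃ Y₂ := by
  simp only [bsp_comm Y₃, bsp_add_left]

theorem qsp_add (Y Y' : Matrix (Fin g ⊕ Fin g) (Fin g ⊕ Fin g) (ZMod 2)) :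
    qsp g (Y + Y') = qsp g Y + qsp g Y' + bsp g Y Y' := by
  simp only [qsp, bsp, Matrix.add_apply, add_mul, mul_add, Finset.sum_add_distrib]
  ring

theorem bsp_eq_trace_mul {Y Y' : Matrix (Fin g ⊕ Fin g) (Fin g ⊕ Fin g) (ZMod 2)}
    (hY : Y ∈ spSet2 g) (hY' : Y' ∈ spSet2 g) : bsp g Y Y' = trace (Y * Y') := by
  obtain ⟨A, B, C, hB, hC, rfl⟩ := exists_fromBlocks_of_mem_spSet2 hY
  obtain ⟨A', B', C', hB', hC', rfl⟩ := exists_fromBlocks_of_mem_spSet2 hY'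
  have hAA : trace (Aᵀ * A'ᵀ) = trace (A * A') := by
    rw [← transpose_mul, trace_transpose, trace_mul_comm]
  rw [bsp_fromBlocks, fromBlocks_multiply, trace_fromBlocks, trace_add, trace_add, hAA,
    CharTwo.trace_mul_eq_sum_diag_mul B C' fun i j => by rw [hB.apply, hC'.apply],
    CharTwo.trace_mul_eq_sum_diag_mul C B' fun i j => by rw [hC.apply, hB'.apply]]
  simp only [mul_comm (C _ _)]
  linear_combination (norm := ring_nf) -CharTwo.add_self_eq_zero (trace (A * A'))

end Forms

theorem conj_mul_add_transpose_mul {n R : Type*} [Fintype n] [DecidableEq n] [CommRing R]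
    {J P Q : Matrix n n R} (hP : Pᵀ * J * P = J) (hPQ : P * Q = 1) (Y : Matrix n n R) :
    J * (P * Y * Q) + (P * Y * Q)ᵀ * J = Qᵀ * (J * Y + Yᵀ * J) * Q := by
  have hJP : Qᵀ * J = J * P := by
    conv_lhs => rw [← hP]
    rw [← mul_assoc, ← mul_assoc, ← transpose_mul, hPQ, transpose_one, one_mul]
  have hPJ : Pᵀ * J = J * Q := by
    conv_rhs => rw [← hP]
    rw [mul_assoc _ P Q, hPQ, mul_one]
  calc J * (P * Y * Q) + (P * Y * Q)ᵀ * J = J * P * Y * Q + Qᵀ * Yᵀ * (Pᵀ * J) := by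
        simp only [transpose_mul, mul_assoc]
    _ = Qᵀ * (J * Y + Yᵀ * J) * Q := by
        rw [← hJP, hPJ]
        simp only [mul_add, add_mul, mul_assoc]

theorem conj_mem_spSet2 {g : ℕ} {P Q Y : Matrix (Fin g ⊕ Fin g) (Fin g ⊕ Fin g) (ZMod 2)}
    (hP : Pᵀ * Jmat g (ZMod 2) * P = Jmat g (ZMod 2)) (hPQ : P * Q = 1) (hY : Y ∈ spSet2 g) :
    P * Y * Q ∈ spSet2 g := by
  change _ = 0
  rw [conj_mul_add_transpose_mul hP hPQ, show _ + _ = (0 : Matrix _ _ _) from hY,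
    mul_zero, zero_mul]

theorem bsp_conj {g : ℕ} {P Q Y Y' : Matrix (Fin g ⊕ Fin g) (Fin g ⊕ Fin g) (ZMod 2)}
    (hP : Pᵀ * Jmat g (ZMod 2) * P = Jmat g (ZMod 2)) (hPQ : P * Q = 1) (hQP : Q * P = 1)
    (hY : Y ∈ spSet2 g) (hY' : Y' ∈ spSet2 g) :
    bsp g (P * Y * Q) (P * Y' * Q) = bsp g Y Y' := by
  rw [bsp_eq_trace_mul (conj_mem_spSet2 hP hPQ hY) (conj_mem_spSet2 hP hPQ hY'),
    bsp_eq_trace_mul hY hY']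
  calc trace (P * Y * Q * (P * Y' * Q)) = trace (P * (Y * (Q * P) * Y') * Q) := by
        simp only [mul_assoc]
    _ = trace (Y * Y') := by
        rw [hQP, mul_one, trace_mul_cycle, hQP, one_mul]

abbrev reduceMod2 : ZMod 4 →+* ZMod 2 := ZMod.castHom (by norm_num) (ZMod 2)

def liftMod4 (x : ZMod 2) : ZMod 4 := x.val

def doubleMod4 : ZMod 2 →+ ZMod 4 where
  toFun x := 2 * liftMod4 x
  map_zero' := by decide
  map_add' := by decide

theorem reduceMod2_liftMod4 : ∀ x : ZMod 2, reduceMod2 (liftMod4 x) = x := by decide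

theorem doubleMod4_mul : ∀ x y : ZMod 2, doubleMod4 (x * y) = 2 * (liftMod4 x * liftMod4 y) := by
  decide

theorem doubleMod4_injective : Function.Injective doubleMod4 := by decide

theorem exists_eq_add_two_mul_of_reduceMod2_eq :
    ∀ e f : ZMod 4, reduceMod2 e = reduceMod2 f → ∃ d, f = e + 2 * d := by
  decide

theorem mul_self_eq_one_of_reduceMod2_eq_one : ∀ x : ZMod 4, reduceMod2 x = 1 → x * x = 1 := by
  decide

theorem map_liftMod4_map_reduceMod2 {m n : Type*} (M : Matrix m n (ZMod 2)) :
    (M.map liftMod4).map reduceMod2 = M := by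
  ext i j
  exact reduceMod2_liftMod4 _

section Mod4

variable {n : Type*} [Fintype n]

theorem two_mul_trace_map_liftMod4_mul (A B : Matrix n n (ZMod 2)) :
    2 * trace (A.map liftMod4 * B.map liftMod4) = doubleMod4 (trace (A * B)) := by
  simp only [trace, diag, mul_apply, map_apply, map_sum, doubleMod4_mul, Finset.mul_sum]

theorem trace_mul_self_eq_of_map_reduceMod2_eq {M N : Matrix n n (ZMod 4)}
    (h : M.map reduceMod2 = N.map reduceMod2) : trace (M * M) = trace (N * N) := by
  choose D hD using fun i j =>
    exists_eq_add_two_mul_of_reduceMod2_eq (M i j) (N i j) (congrFun₂ h i j)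
  obtain rfl : N = M + (2 : ZMod 4) • of D := by
    ext i j
    exact hD i j
  have h4 : (4 : ZMod 4) = 0 := rfl
  simp only [add_mul, mul_add, Matrix.smul_mul, Matrix.mul_smul, trace_add, trace_smul, smul_eq_mul,
    trace_mul_comm (of D) M]
  linear_combination (-(trace (M * of D)) - trace (of D * of D)) * h4

variable [DecidableEq n]

theorem isUnit_det_of_isUnit_det_map_reduceMod2 {M : Matrix n n (ZMod 4)}
    (h : IsUnit (M.map reduceMod2).det) : IsUnit M.det := by
  refine IsUnit.of_mul_eq_one _ (mul_self_eq_one_of_reduceMod2_eq_one _ ?_)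
  rw [RingHom.map_det]
  exact h.eq_one

end Mod4

theorem trace_mul_self_map_liftMod4 {g : ℕ} {Y : Matrix (Fin g ⊕ Fin g) (Fin g ⊕ Fin g) (ZMod 2)}
    (hY : Y ∈ spSet2 g) : trace (Y.map liftMod4 * Y.map liftMod4) = doubleMod4 (qsp g Y) := by
  obtain ⟨A, B, C, hB, hC, rfl⟩ := exists_fromBlocks_of_mem_spSet2 hY
  have hAA : trace ((A.map liftMod4)ᵀ * (A.map liftMod4)ᵀ) =
      trace (A.map liftMod4 * A.map liftMod4) := by
    rw [← transpose_mul, trace_transpose]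
  rw [fromBlocks_map, transpose_map, fromBlocks_multiply, trace_fromBlocks, trace_add, trace_add,
    hAA, trace_mul_comm (C.map liftMod4), qsp_fromBlocks, map_add,
    ← ZMod.trace_mul_self_eq_trace A,
    ← CharTwo.trace_mul_eq_sum_diag_mul B C fun i j => by rw [hB.apply, hC.apply],
    ← two_mul_trace_map_liftMod4_mul, ← two_mul_trace_map_liftMod4_mul]
  ring

theorem qsp_conj {g : ℕ} {P Q Y : Matrix (Fin g ⊕ Fin g) (Fin g ⊕ Fin g) (ZMod 2)}
    (hP : Pᵀ * Jmat g (ZMod 2) * P = Jmat g (ZMod 2)) (hPQ : P * Q = 1) (hQP : Q * P = 1)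
    (hY : Y ∈ spSet2 g) : qsp g (P * Y * Q) = qsp g Y := by
  set P₄ := P.map liftMod4
  set Y₄ := Y.map liftMod4
  have hdet : IsUnit P₄.det := isUnit_det_of_isUnit_det_map_reduceMod2 <| by
    rw [map_liftMod4_map_reduceMod2]
    exact isUnit_det_of_right_inverse hPQ
  have hinv : P₄⁻¹.map reduceMod2 = Q := by
    have h : P * P₄⁻¹.map reduceMod2 = 1 := by
      rw [← map_liftMod4_map_reduceMod2 P, ← Matrix.map_mul, mul_nonsing_inv _ hdet,
        Matrix.map_one _ (map_zero _) (map_one _)]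
    rw [← one_mul (P₄⁻¹.map reduceMod2), ← hQP, mul_assoc, h, mul_one]
  have hconj : (P₄ * Y₄ * P₄⁻¹).map reduceMod2 = ((P * Y * Q).map liftMod4).map reduceMod2 := by
    rw [Matrix.map_mul, Matrix.map_mul, hinv, map_liftMod4_map_reduceMod2,
      map_liftMod4_map_reduceMod2, map_liftMod4_map_reduceMod2]
  apply doubleMod4_injective
  calc doubleMod4 (qsp g (P * Y * Q))
      = trace ((P₄ * Y₄ * P₄⁻¹) * (P₄ * Y₄ * P₄⁻¹)) := by
        rw [← trace_mul_self_map_liftMod4 (conj_mem_spSet2 hP hPQ hY),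
          trace_mul_self_eq_of_map_reduceMod2_eq hconj]
    _ = trace (P₄ * (Y₄ * Y₄) * P₄⁻¹) := by
        simp only [mul_assoc, nonsing_inv_mul_cancel_left _ _ hdet]
    _ = doubleMod4 (qsp g Y) := by
        rw [trace_conj ((isUnit_iff_isUnit_det _).2 hdet), trace_mul_self_map_liftMod4 hY]

theorem stmt12_general (g : ℕ) :
    (∀ Y ∈ spSet2 g, ∀ Y' ∈ spSet2 g,
      qsp g (Y + Y') = qsp g Y + qsp g Y' + bsp g Y Y') ∧
    (∀ Y₁ Y₂ Y₃, bsp g (Y₁ + Y₂) Y₃ = bsp g Y₁ Y₃ + bsp g Y₂ Y₃ ∧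
      bsp g Y₃ (Y₁ + Y₂) = bsp g Y₃ Y₁ + bsp g Y₃ Y₂) ∧
    (∀ P Q : Matrix (Fin g ⊕ Fin g) (Fin g ⊕ Fin g) (ZMod 2),
      Pᵀ * Jmat g (ZMod 2) * P = Jmat g (ZMod 2) → P * Q = 1 → Q * P = 1 →
      ∀ Y ∈ spSet2 g, ∀ Y' ∈ spSet2 g,
        qsp g (P * Y * Q) = qsp g Y ∧ bsp g (P * Y * Q) (P * Y' * Q) = bsp g Y Y') :=
  ⟨fun Y _ Y' _ => qsp_add Y Y',
    fun Y₁ Y₂ Y₃ => ⟨bsp_add_left Y₁ Y₂ Y₃, bsp_add_right Y₁ Y₂ Y₃⟩,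
    fun _ _ hP hPQ hQP _ hY _ hY' => ⟨qsp_conj hP hPQ hQP hY, bsp_conj hP hPQ hQP hY hY'⟩⟩

/-- `q` is a quadratic form on `sp(2g,2)` with polar form `b`, and both `q` and `b`
are invariant under the conjugation action of `Sp(2g,2)`. -/
theorem stmt12 (g : ℕ) (hg : 1 ≤ g) :
    (∀ Y ∈ spSet2 g, ∀ Y' ∈ spSet2 g,
      qsp g (Y + Y') = qsp g Y + qsp g Y' + bsp g Y Y') ∧
    (∀ Y₁ Y₂ Y₃, bsp g (Y₁ + Y₂) Y₃ = bsp g Y₁ Y₃ + bsp g Y₂ Y₃ ∧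
      bsp g Y₃ (Y₁ + Y₂) = bsp g Y₃ Y₁ + bsp g Y₃ Y₂) ∧
    (∀ P Q : Matrix (Fin g ⊕ Fin g) (Fin g ⊕ Fin g) (ZMod 2),
      Pᵀ * Jmat g (ZMod 2) * P = Jmat g (ZMod 2) → P * Q = 1 → Q * P = 1 →
      ∀ Y ∈ spSet2 g, ∀ Y' ∈ spSet2 g,
        qsp g (P * Y * Q) = qsp g Y ∧ bsp g (P * Y * Q) (P * Y' * Q) = bsp g Y Y') :=
  stmt12_general g
end

section
/- The radical of the quadratic form q([[a,b],[c,a^t]]) = Tr(a) + ⟨Diag(b),Diag(c)⟩ on sp(2g,2), i.e., the set Y of elements in the radical of the associated bilinear form on which q vanishes, is the set of matrices [[a,b],[c,a^t]] ∈ sp(2g,2) with Diag(b) = Diag(c) = 0 and Tr(a) = 0; it is a subspace of dimension g(2g+1) - (2g+1). -/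
open Matrix

/-! Writing `Y = [[a, b], [c, d]]`, membership in `sp(2g)` means that `b` and `c` are symmetric and
`d = -aᵀ`. Pairing `Y` with the elements of `sp(2g)` having a single diagonal entry `1` in the `b`
or `c` block shows that the radical of the polar form consists of those `Y` with
`Diag b = Diag c = 0`, and on these `q` is the trace of `a`. The radical of `q` is therefore
parametrised by a traceless `a` and two symmetric matrices `b`, `c` with zero diagonal; the latter
are functions on the `g(g-1)/2` unordered pairs of distinct indices, so the dimension is
`(g² - 1) + g(g - 1) = g(2g+1) - (2g+1)`. -/

theorem Matrix.finrank_ker_traceLinearMap {n K : Type*} [Fintype n] [Nonempty n] [DivisionRing K] :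
    Module.finrank K (LinearMap.ker (traceLinearMap n K K)) =
      Fintype.card n * Fintype.card n - 1 := by
  classical
  have hsurj : Function.Surjective (traceLinearMap n K K) := fun c =>
    ⟨single (Classical.arbitrary n) (Classical.arbitrary n) c, trace_single_eq_same ..⟩
  have := LinearMap.finrank_range_add_finrank_ker (traceLinearMap n K K)
  rw [LinearMap.range_eq_top_of_surjective _ hsurj, finrank_top, Module.finrank_self,
    Module.finrank_matrix, Module.finrank_self, mul_one] at this
  omega

section Hollow

variable (n R : Type*) [Semiring R]

def hollowSymmetricMatrices : Submodule R (Matrix n n R) where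
  carrier := {B | Bᵀ = B ∧ ∀ i, B i i = 0}
  add_mem' := by
    rintro B B' ⟨hB, hBd⟩ ⟨hB', hBd'⟩
    exact ⟨by rw [transpose_add, hB, hB'], fun i => by simp [hBd, hBd']⟩
  zero_mem' := ⟨transpose_zero, fun _ => rfl⟩
  smul_mem' := by
    rintro c B ⟨hB, hBd⟩
    exact ⟨by rw [transpose_smul, hB], fun i => by simp [hBd]⟩

def hollowSymmetricMatricesEquiv [DecidableEq n] :
    hollowSymmetricMatrices n R ≃ₗ[R] ({z : Sym2 n // ¬z.IsDiag} → R) where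
  toFun B z := Sym2.lift ⟨fun i j => (B : Matrix n n R) i j,
    fun i j => congr_fun₂ B.2.1 j i⟩ z
  map_add' B B' := by ext ⟨z, -⟩; induction z using Sym2.ind; rfl
  map_smul' c B := by ext ⟨z, -⟩; induction z using Sym2.ind; rfl
  invFun f := ⟨of fun i j => if h : i = j then 0 else f ⟨s(i, j), Sym2.mk_isDiag_iff.not.mpr h⟩,
    by ext i j; by_cases h : i = j <;> simp [h, eq_comm, Sym2.eq_swap], fun i => by simp⟩
  left_inv B := by
    ext i j
    by_cases h : i = j
    · subst h; simp [B.2.2]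
    · simp [h]
  right_inv f := by
    ext ⟨z, hz⟩
    induction z using Sym2.ind
    simp [Sym2.mk_isDiag_iff.not.mp hz]

theorem finrank_hollowSymmetricMatrices [Fintype n] [StrongRankCondition R] :
    Module.finrank R (hollowSymmetricMatrices n R) = (Fintype.card n).choose 2 := by
  classical
  rw [(hollowSymmetricMatricesEquiv n R).finrank_eq, Module.finrank_fintype_fun_eq_card,
    Sym2.card_subtype_not_diag]

end Hollow

theorem Jmat_mul_add_transpose_mul_fromBlocks_eq_zero_iff {g : ℕ} {R : Type*} [CommRing R]
    (A B C D : Matrix (Fin g) (Fin g) R) :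
    Jmat g R * fromBlocks A B C D + (fromBlocks A B C D)ᵀ * Jmat g R = 0 ↔
      Cᵀ = C ∧ Bᵀ = B ∧ D = -Aᵀ := by
  rw [Jmat, fromBlocks_transpose, fromBlocks_multiply, fromBlocks_multiply, fromBlocks_add,
    ← fromBlocks_zero, fromBlocks_inj]
  simp only [zero_mul, one_mul, neg_mul, add_zero, zero_add, mul_zero, mul_one, mul_neg]
  rw [add_neg_eq_zero, add_eq_zero_iff_eq_neg, neg_add_eq_zero, neg_add_eq_zero,
    eq_comm (a := C), eq_comm (a := B)]
  constructor
  · rintro ⟨hC, hD, -, hB⟩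
    exact ⟨hC, hB, hD⟩
  · rintro ⟨hC, hB, rfl⟩
    exact ⟨hC, rfl, by rw [transpose_neg, transpose_transpose, neg_neg], hB⟩

theorem fromBlocks_single₂₁_mem_spSet2 {g : ℕ} (i : Fin g) :
    fromBlocks 0 0 (single i i 1) 0 ∈ spSet2 g :=
  (Jmat_mul_add_transpose_mul_fromBlocks_eq_zero_iff _ _ _ _).mpr
    ⟨transpose_single .., transpose_zero, by simp⟩

theorem fromBlocks_single₁₂_mem_spSet2 {g : ℕ} (i : Fin g) :
    fromBlocks 0 (single i i 1) 0 0 ∈ spSet2 g :=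
  (Jmat_mul_add_transpose_mul_fromBlocks_eq_zero_iff _ _ _ _).mpr
    ⟨transpose_zero, transpose_single .., by simp⟩

theorem bsp_fromBlocks_single₂₁ {g : ℕ} (Y : Matrix (Fin g ⊕ Fin g) (Fin g ⊕ Fin g) (ZMod 2))
    (i : Fin g) : bsp g Y (fromBlocks 0 0 (single i i 1) 0) = Y (Sum.inl i) (Sum.inr i) := by
  simp [bsp, single_apply]

theorem bsp_fromBlocks_single₁₂ {g : ℕ} (Y : Matrix (Fin g ⊕ Fin g) (Fin g ⊕ Fin g) (ZMod 2))
    (i : Fin g) : bsp g Y (fromBlocks 0 (single i i 1) 0 0) = Y (Sum.inr i) (Sum.inl i) := by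
  simp [bsp, single_apply]

theorem qsp_radical_eq (g : ℕ) :
    {Y | Y ∈ spSet2 g ∧ (∀ Y' ∈ spSet2 g, bsp g Y Y' = 0) ∧ qsp g Y = 0} =
      {Y | Y ∈ spSet2 g ∧ (∀ i, Y (Sum.inl i) (Sum.inr i) = 0) ∧
        (∀ i, Y (Sum.inr i) (Sum.inl i) = 0) ∧ (∑ i : Fin g, Y (Sum.inl i) (Sum.inl i)) = 0} := by
  ext Y
  refine and_congr_right fun _ => ⟨?_, ?_⟩
  · rintro ⟨hb, hq⟩
    have hB i : Y (Sum.inl i) (Sum.inr i) = 0 :=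
      bsp_fromBlocks_single₂₁ Y i ▸ hb _ (fromBlocks_single₂₁_mem_spSet2 i)
    have hC i : Y (Sum.inr i) (Sum.inl i) = 0 :=
      bsp_fromBlocks_single₁₂ Y i ▸ hb _ (fromBlocks_single₁₂_mem_spSet2 i)
    exact ⟨hB, hC, by simpa [qsp, hB] using hq⟩
  · rintro ⟨hB, hC, htr⟩
    exact ⟨fun _ _ => by simp [bsp, hB, hC], by simp [qsp, hB, htr]⟩

section TracelessHollowBlocks

variable (g : ℕ) (R : Type*) [CommRing R]

def fromBlocksTracelessHollow :
    LinearMap.ker (traceLinearMap (Fin g) R R) × hollowSymmetricMatrices (Fin g) R ×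
      hollowSymmetricMatrices (Fin g) R →ₗ[R] Matrix (Fin g ⊕ Fin g) (Fin g ⊕ Fin g) R where
  toFun x := fromBlocks x.1 x.2.1 x.2.2 (-(x.1 : Matrix (Fin g) (Fin g) R)ᵀ)
  map_add' x y := by simp only [Prod.fst_add, Prod.snd_add, Submodule.coe_add, fromBlocks_add,
    transpose_add, neg_add]
  map_smul' c x := by simp only [Prod.smul_fst, Prod.smul_snd, Submodule.coe_smul,
    fromBlocks_smul, transpose_smul, smul_neg, RingHom.id_apply]

theorem fromBlocksTracelessHollow_injective :
    Function.Injective (fromBlocksTracelessHollow g R) := by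
  intro x y h
  obtain ⟨hA, hB, hC, -⟩ := fromBlocks_inj.mp h
  exact Prod.ext (Subtype.ext hA) (Prod.ext (Subtype.ext hB) (Subtype.ext hC))

theorem coe_range_fromBlocksTracelessHollow :
    (LinearMap.range (fromBlocksTracelessHollow g R) : Set _) =
      {Y | Jmat g R * Y + Yᵀ * Jmat g R = 0 ∧ (∀ i, Y (Sum.inl i) (Sum.inr i) = 0) ∧
        (∀ i, Y (Sum.inr i) (Sum.inl i) = 0) ∧ (∑ i : Fin g, Y (Sum.inl i) (Sum.inl i)) = 0} := by
  ext Y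
  obtain ⟨A, B, C, D, rfl⟩ : ∃ A B C D, Y = fromBlocks A B C D :=
    ⟨_, _, _, _, (fromBlocks_toBlocks Y).symm⟩
  simp only [SetLike.mem_coe, LinearMap.mem_range, Set.mem_ofPred_eq,
    Jmat_mul_add_transpose_mul_fromBlocks_eq_zero_iff, fromBlocks_apply₁₁, fromBlocks_apply₁₂,
    fromBlocks_apply₂₁]
  constructor
  · rintro ⟨⟨⟨A', hA'⟩, ⟨B', hB', hBd'⟩, ⟨C', hC', hCd'⟩⟩, h⟩
    obtain ⟨rfl, rfl, rfl, rfl⟩ := fromBlocks_inj.mp h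
    exact ⟨⟨hC', hB', rfl⟩, hBd', hCd', hA'⟩
  · rintro ⟨⟨hC, hB, rfl⟩, hBd, hCd, htr⟩
    exact ⟨⟨⟨A, htr⟩, ⟨B, hB, hBd⟩, ⟨C, hC, hCd⟩⟩, rfl⟩

end TracelessHollowBlocks

theorem mul_self_sub_one_add_choose_two_add_choose_two (g : ℕ) :
    g * g - 1 + (g.choose 2 + g.choose 2) = g * (2 * g + 1) - (2 * g + 1) := by
  rw [← two_mul, Nat.choose_two_right, Nat.mul_div_cancel' (Nat.even_mul_pred_self g).two_dvd]
  cases g with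
  | zero => rfl
  | succ k =>
    simp only [add_tsub_cancel_right]
    ring_nf
    omega

/-- The radical `Y` of the quadratic form `q` on `sp(2g,2)` (elements of the radical of
the polar form `b` on which `q` vanishes) consists exactly of the matrices
`[[a,b],[c,aᵀ]] ∈ sp(2g,2)` with `Diag b = Diag c = 0` and `Tr a = 0`; it is a subspace
of dimension `g(2g+1) - (2g+1)`. -/
theorem stmt13 (g : ℕ) (hg : 1 ≤ g) :
    {Y | Y ∈ spSet2 g ∧ (∀ Y' ∈ spSet2 g, bsp g Y Y' = 0) ∧ qsp g Y = 0} =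
      {Y | Y ∈ spSet2 g ∧ (∀ i, Y (Sum.inl i) (Sum.inr i) = 0) ∧
        (∀ i, Y (Sum.inr i) (Sum.inl i) = 0) ∧ (∑ i : Fin g, Y (Sum.inl i) (Sum.inl i)) = 0} ∧
    ∃ W : Submodule (ZMod 2) (Matrix (Fin g ⊕ Fin g) (Fin g ⊕ Fin g) (ZMod 2)),
      (W : Set (Matrix (Fin g ⊕ Fin g) (Fin g ⊕ Fin g) (ZMod 2))) =
        {Y | Y ∈ spSet2 g ∧ (∀ Y' ∈ spSet2 g, bsp g Y Y' = 0) ∧ qsp g Y = 0} ∧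
      Nonempty (Module.Basis (Fin (g * (2 * g + 1) - (2 * g + 1))) (ZMod 2) W) := by
  have : Nonempty (Fin g) := ⟨⟨0, hg⟩⟩
  refine ⟨qsp_radical_eq g, LinearMap.range (fromBlocksTracelessHollow g (ZMod 2)),
    by rw [qsp_radical_eq, coe_range_fromBlocksTracelessHollow]; rfl,
    ⟨Module.finBasisOfFinrankEq _ _ ?_⟩⟩
  rw [LinearMap.finrank_range_of_inj (fromBlocksTracelessHollow_injective g _),
    Module.finrank_prod, Module.finrank_prod, Matrix.finrank_ker_traceLinearMap,
    finrank_hollowSymmetricMatrices, Fintype.card_fin,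
    mul_self_sub_one_add_choose_two_add_choose_two]
end
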